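/- Let K ∈ M_n(ℝ) be a DPP kernel and define the 2n×2n block matrix 𝕂 = [[K, I_n − K],[−K, K]]. Then 𝕂 is a DPP kernel, and if (X₁, X₂) ∼ DPP(𝕂) (under the identification of subsets of {1,...,2n} with pairs of subsets of {1,...,n}) then X₁ = X₂ almost surely, with both marginals distributed as DPP(K). -/
import Mathlib


open Matrix BigOperators Finset

/-- The principal minor of `M` indexed by the subset `S`. -/
noncomputable def pminor {m : Type*} [Fintype m] [DecidableEq m]
    (M : Matrix m m ℝ) (S : Finset m) : ℝ :=
  (M.submatrix (fun i : {x // x ∈ S} => (i : m)) (fun i : {x // x ∈ S} => (i : m))).det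

/-- The indicator vector of the subset `S`. -/
def indVec {m : Type*} [DecidableEq m] (S : Finset m) : m → ℝ := fun i => if i ∈ S then 1 else 0

/-- `K` is a DPP kernel: each value `P(X = Sᶜ) = det(D(1_{Sᶜ})(I-K) + D(1_S)K)` is
nonnegative, i.e. `K` defines a determinantal point process. -/
def IsDPPKernel {m : Type*} [Fintype m] [DecidableEq m] (K : Matrix m m ℝ) : Prop :=
  ∀ S : Finset m,
    0 ≤ (Matrix.diagonal (indVec Sᶜ) * (1 - K) + Matrix.diagonal (indVec S) * K).det

section Aux

set_option linter.unusedSectionVars false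

variable {m m' : Type*} [Fintype m] [DecidableEq m] [Fintype m'] [DecidableEq m']

lemma pminor_singleton (M : Matrix m m ℝ) (a : m) : pminor M {a} = M a a := by
  letI : Unique {x // x ∈ ({a} : Finset m)} :=
    ⟨⟨⟨a, Finset.mem_singleton_self a⟩⟩, fun x => Subtype.ext (Finset.mem_singleton.mp x.2)⟩
  rw [pminor, Matrix.det_unique]
  rfl

lemma pminor_eq_of_equiv (M : Matrix m m ℝ) (N : Matrix m' m' ℝ)
    (S : Finset m) (S' : Finset m') (e : {x // x ∈ S} ≃ {x // x ∈ S'})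
    (h : ∀ x y : {x // x ∈ S}, N (e x : m') (e y : m') = M (x : m) (y : m)) :
    pminor N S' = pminor M S := by
  rw [pminor, pminor, ← Matrix.det_submatrix_equiv_self e]
  congr 1
  ext x y
  simp [Matrix.submatrix_apply, h]

lemma diagonal_sum_eq (v : m ⊕ m' → ℝ) :
    Matrix.diagonal v =
      Matrix.fromBlocks (Matrix.diagonal (v ∘ Sum.inl)) 0 0 (Matrix.diagonal (v ∘ Sum.inr)) := by
  ext x y
  rcases x with i | i <;> rcases y with j | j <;>
    simp [Matrix.diagonal_apply, Matrix.fromBlocks]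

lemma indVec_mul_compl (S : Finset m) : indVec S * indVec Sᶜ = 0 := by
  funext i
  by_cases h : i ∈ S <;> simp [indVec, h]

lemma indVec_mul_self (S : Finset m) : indVec S * indVec S = indVec S := by
  funext i
  by_cases h : i ∈ S <;> simp [indVec, h]

lemma indVec_add_compl (S : Finset m) : indVec S + indVec Sᶜ = 1 := by
  funext i
  by_cases h : i ∈ S <;> simp [indVec, h]

def pairEquiv {α : Type*} [DecidableEq α] (a b : α) (hab : a ≠ b) :
    Fin 2 ≃ {x // x ∈ ({a, b} : Finset α)} :=
  { toFun := ![⟨a, by simp⟩, ⟨b, by simp⟩]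
    invFun := fun x => if (x : α) = a then 0 else 1
    left_inv := by
      intro x
      fin_cases x
      · simp
      · simp [hab.symm]
    right_inv := by
      rintro ⟨v, hv⟩
      simp only [Finset.mem_insert, Finset.mem_singleton] at hv
      rcases hv with rfl | rfl
      · simp
      · simp [hab.symm] }

@[simp] lemma pairEquiv_zero {α : Type*} [DecidableEq α] (a b : α) (hab : a ≠ b) :
    ((pairEquiv a b hab 0 : {x // x ∈ ({a, b} : Finset α)}) : α) = a := rfl

@[simp] lemma pairEquiv_one {α : Type*} [DecidableEq α] (a b : α) (hab : a ≠ b) :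
    ((pairEquiv a b hab 1 : {x // x ∈ ({a, b} : Finset α)}) : α) = b := rfl

theorem identical_coupling {n : ℕ} (K : Matrix (Fin n) (Fin n) ℝ) (hK : IsDPPKernel K) :
    IsDPPKernel (Matrix.fromBlocks K (1 - K) (-K) K) ∧
    ∀ μ : Finset (Fin n ⊕ Fin n) → ℝ, (∀ A, 0 ≤ μ A) →
      (∀ T : Finset (Fin n ⊕ Fin n),
        ∑ A ∈ Finset.univ.filter (fun A : Finset (Fin n ⊕ Fin n) => T ⊆ A), μ A
          = pminor (Matrix.fromBlocks K (1 - K) (-K) K) T) →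
      -- `X₁ = X₂` almost surely:
      (∀ A : Finset (Fin n ⊕ Fin n),
        (Finset.univ.filter fun i : Fin n => Sum.inl i ∈ A) ≠
          (Finset.univ.filter fun i : Fin n => Sum.inr i ∈ A) → μ A = 0) ∧
      -- both marginals are `DPP(K)`:
      (∀ T : Finset (Fin n),
        ∑ A ∈ Finset.univ.filter
            (fun A : Finset (Fin n ⊕ Fin n) => ∀ i ∈ T, Sum.inl i ∈ A), μ A = pminor K T) ∧
      (∀ T : Finset (Fin n),
        ∑ A ∈ Finset.univ.filter
            (fun A : Finset (Fin n ⊕ Fin n) => ∀ i ∈ T, Sum.inr i ∈ A), μ A = pminor K T) := by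
  set Kb : Matrix (Fin n ⊕ Fin n) (Fin n ⊕ Fin n) ℝ := Matrix.fromBlocks K (1 - K) (-K) K
    with hKb
  -- Part 1 : `Kb` is a DPP kernel.
  have part1 : IsDPPKernel Kb := by
    intro S
    set S₁ : Finset (Fin n) := Finset.univ.filter (fun i => Sum.inl i ∈ S) with hS₁def
    set S₂ : Finset (Fin n) := Finset.univ.filter (fun i => Sum.inr i ∈ S) with hS₂def
    set s₁ : Matrix (Fin n) (Fin n) ℝ := Matrix.diagonal (indVec S₁) with hs₁def
    set c₁ : Matrix (Fin n) (Fin n) ℝ := Matrix.diagonal (indVec S₁ᶜ) with hc₁def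
    set s₂ : Matrix (Fin n) (Fin n) ℝ := Matrix.diagonal (indVec S₂) with hs₂def
    set c₂ : Matrix (Fin n) (Fin n) ℝ := Matrix.diagonal (indVec S₂ᶜ) with hc₂def
    have hvl : indVec S ∘ Sum.inl = indVec S₁ := by
      funext i; simp [indVec, hS₁def]
    have hvr : indVec S ∘ Sum.inr = indVec S₂ := by
      funext i; simp [indVec, hS₂def]
    have hwl : indVec Sᶜ ∘ Sum.inl = indVec S₁ᶜ := by
      funext i; simp [indVec, hS₁def]
    have hwr : indVec Sᶜ ∘ Sum.inr = indVec S₂ᶜ := by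
      funext i; simp [indVec, hS₂def]
    have hdS : Matrix.diagonal (indVec S) = Matrix.fromBlocks s₁ 0 0 s₂ := by
      rw [diagonal_sum_eq, hvl, hvr]
    have hdSc : Matrix.diagonal (indVec Sᶜ) = Matrix.fromBlocks c₁ 0 0 c₂ := by
      rw [diagonal_sum_eq, hwl, hwr]
    have h1Kb : (1 : Matrix (Fin n ⊕ Fin n) (Fin n ⊕ Fin n) ℝ) - Kb
        = Matrix.fromBlocks (1 - K) (-(1 - K)) K (1 - K) := by
      rw [hKb, ← Matrix.fromBlocks_one]
      ext x y
      rcases x with i | i <;> rcases y with j | j <;>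
        simp [Matrix.fromBlocks, Matrix.sub_apply]
    -- the matrix whose determinant we must bound
    have hM0 : Matrix.diagonal (indVec Sᶜ) * (1 - Kb) + Matrix.diagonal (indVec S) * Kb
        = Matrix.fromBlocks (c₁ * (1 - K) + s₁ * K) (s₁ * (1 - K) - c₁ * (1 - K))
            (c₂ * K - s₂ * K) (c₂ * (1 - K) + s₂ * K) := by
      rw [hdS, hdSc, h1Kb, hKb, Matrix.fromBlocks_multiply, Matrix.fromBlocks_multiply,
        Matrix.fromBlocks_add]
      exact Matrix.fromBlocks_inj.mpr
        ⟨by noncomm_ring, by noncomm_ring, by noncomm_ring, by noncomm_ring⟩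
    set M₀ : Matrix (Fin n ⊕ Fin n) (Fin n ⊕ Fin n) ℝ :=
      Matrix.diagonal (indVec Sᶜ) * (1 - Kb) + Matrix.diagonal (indVec S) * Kb with hM₀def
    set F : Matrix (Fin n ⊕ Fin n) (Fin n ⊕ Fin n) ℝ := Matrix.fromBlocks 1 1 0 1 with hFdef
    have hdetF : F.det = 1 := by
      rw [hFdef, Matrix.det_fromBlocks_zero₂₁]; simp
    have hM1 : M₀ * F = Matrix.fromBlocks (c₁ * (1 - K) + s₁ * K) s₁ (c₂ * K - s₂ * K) c₂ := by
      rw [hM0, hFdef, Matrix.fromBlocks_multiply]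
      refine Matrix.fromBlocks_inj.mpr ⟨by noncomm_ring, ?_, by noncomm_ring, ?_⟩
      · -- (c₁(1-K)+s₁K)*1 + (s₁(1-K)-c₁(1-K))*1 = s₁
        have h1 : s₁ * (1 - K) + s₁ * K = s₁ := by noncomm_ring
        calc (c₁ * (1 - K) + s₁ * K) * 1 + (s₁ * (1 - K) - c₁ * (1 - K)) * 1
            = s₁ * (1 - K) + s₁ * K := by noncomm_ring
          _ = s₁ := h1
      · have h1 : c₂ * K + c₂ * (1 - K) = c₂ := by noncomm_ring
        calc (c₂ * K - s₂ * K) * 1 + (c₂ * (1 - K) + s₂ * K) * 1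
            = c₂ * K + c₂ * (1 - K) := by noncomm_ring
          _ = c₂ := h1
    have hdetM0F : M₀.det = (M₀ * F).det := by
      rw [Matrix.det_mul, hdetF, mul_one]
    show 0 ≤ M₀.det
    by_cases hS : S₁ = S₂
    · -- the diagonal case, reduces to `hK S₁`
      have hs12 : s₂ = s₁ := by rw [hs₂def, hs₁def, hS]
      have hc12 : c₂ = c₁ := by rw [hc₂def, hc₁def, hS]
      have hsc : s₁ * c₁ = 0 := by
        rw [hs₁def, hc₁def, Matrix.diagonal_mul_diagonal]
        rw [show (fun i => indVec S₁ i * indVec S₁ᶜ i) = (0 : Fin n → ℝ) from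
          funext fun i => by by_cases h : i ∈ S₁ <;> simp [indVec, h]]
        exact Matrix.diagonal_zero
      have hss : s₁ * s₁ = s₁ := by
        rw [hs₁def, Matrix.diagonal_mul_diagonal]
        rw [show (fun i => indVec S₁ i * indVec S₁ i) = indVec S₁ from
          funext fun i => by by_cases h : i ∈ S₁ <;> simp [indVec, h]]
      have hsum1 : s₁ + c₁ = 1 := by
        rw [hs₁def, hc₁def, Matrix.diagonal_add]
        rw [show (fun i => indVec S₁ i + indVec S₁ᶜ i) = (1 : Fin n → ℝ) from
          funext fun i => by by_cases h : i ∈ S₁ <;> simp [indVec, h]]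
        exact Matrix.diagonal_one
      set E : Matrix (Fin n ⊕ Fin n) (Fin n ⊕ Fin n) ℝ := Matrix.fromBlocks 1 0 s₁ 1 with hEdef
      have hdetE : E.det = 1 := by
        rw [hEdef, Matrix.det_fromBlocks_zero₁₂]; simp
      have hM2 : E * (M₀ * F)
          = Matrix.fromBlocks (c₁ * (1 - K) + s₁ * K) s₁ (c₁ * K) 1 := by
        rw [hM1, hEdef, Matrix.fromBlocks_multiply, hs12, hc12]
        refine Matrix.fromBlocks_inj.mpr ⟨by noncomm_ring, by noncomm_ring, ?_, ?_⟩
        · calc s₁ * (c₁ * (1 - K) + s₁ * K) + 1 * (c₁ * K - s₁ * K)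
              = (s₁ * c₁) * (1 - K) + (s₁ * s₁) * K + (c₁ * K - s₁ * K) := by noncomm_ring
            _ = c₁ * K := by rw [hsc, hss]; noncomm_ring
        · calc s₁ * s₁ + 1 * c₁ = s₁ * s₁ + c₁ := by noncomm_ring
            _ = 1 := by rw [hss, hsum1]
      have : M₀.det = (c₁ * (1 - K) + s₁ * K).det := by
        rw [hdetM0F, ← one_mul ((M₀ * F).det), ← hdetE, ← Matrix.det_mul, hM2,
          Matrix.det_fromBlocks_one₂₂]
        congr 1
        rw [← Matrix.mul_assoc, hsc, Matrix.zero_mul, sub_zero]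
      rw [this, hc₁def, hs₁def]
      exact hK S₁
    · -- S₁ ≠ S₂ : determinant is zero
      have hex : ∃ i, (i ∈ S₁ ∧ i ∉ S₂) ∨ (i ∈ S₂ ∧ i ∉ S₁) := by
        by_contra hcon
        push_neg at hcon
        exact hS (Finset.ext fun i => ⟨(hcon i).1, (hcon i).2⟩)
      obtain ⟨i, hi⟩ := hex
      rcases hi with ⟨hi1, hi2⟩ | ⟨hi2, hi1⟩
      · -- rows `inl i` and `inr i` of `M₀` coincide
        have h0 : M₀.det = 0 := by
          rw [hM0]
          apply Matrix.det_zero_of_row_eq (i := Sum.inl i) (j := Sum.inr i) (by simp)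
          funext y
          rcases y with j | j
          · show (c₁ * (1 - K) + s₁ * K) i j = (c₂ * K - s₂ * K) i j
            simp [hs₁def, hc₁def, hs₂def, hc₂def, Matrix.sub_apply,
              Matrix.diagonal_mul, indVec, hi1, hi2, Finset.mem_compl]
          · show (s₁ * (1 - K) - c₁ * (1 - K)) i j = (c₂ * (1 - K) + s₂ * K) i j
            simp [hs₁def, hc₁def, hs₂def, hc₂def, Matrix.sub_apply,
              Matrix.diagonal_mul, indVec, hi1, hi2, Finset.mem_compl]
        exact le_of_eq h0.symm
      · -- column `inr i` of `M₀ * F` vanishes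
        have h0 : (M₀ * F).det = 0 := by
          apply Matrix.det_eq_zero_of_column_eq_zero (Sum.inr i)
          intro x
          rw [hM1]
          rcases x with j | j
          · show s₁ j i = 0
            rcases eq_or_ne j i with rfl | hne
            · simp [hs₁def, Matrix.diagonal_apply_eq, indVec, hi1]
            · simp [hs₁def, Matrix.diagonal_apply_ne _ hne]
          · show c₂ j i = 0
            rcases eq_or_ne j i with rfl | hne
            · simp [hc₂def, Matrix.diagonal_apply_eq, indVec, hi2]
            · simp [hc₂def, Matrix.diagonal_apply_ne _ hne]
        exact le_of_eq (hdetM0F.trans h0).symm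
  -- small principal minors of `Kb`
  have hsl : ∀ i : Fin n, pminor Kb {Sum.inl i} = K i i := by
    intro i
    rw [pminor_singleton]
    simp [hKb]
  have hsr : ∀ i : Fin n, pminor Kb {Sum.inr i} = K i i := by
    intro i
    rw [pminor_singleton]
    simp [hKb]
  have hpair : ∀ i : Fin n,
      pminor Kb ({Sum.inl i, Sum.inr i} : Finset (Fin n ⊕ Fin n)) = K i i := by
    intro i
    have hne : (Sum.inl i : Fin n ⊕ Fin n) ≠ Sum.inr i := by simp
    rw [pminor, ← Matrix.det_submatrix_equiv_self (pairEquiv _ _ hne), Matrix.det_fin_two]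
    have h00 : Kb (Sum.inl i) (Sum.inl i) = K i i := by simp [hKb]
    have h01 : Kb (Sum.inl i) (Sum.inr i) = 1 - K i i := by
      simp [hKb, Matrix.sub_apply]
    have h10 : Kb (Sum.inr i) (Sum.inl i) = -K i i := by simp [hKb]
    have h11 : Kb (Sum.inr i) (Sum.inr i) = K i i := by simp [hKb]
    simp only [Matrix.submatrix_apply, pairEquiv_zero, pairEquiv_one]
    rw [h00, h01, h10, h11]
    ring
  refine ⟨part1, ?_⟩
  intro μ hμ0 hμcorr
  -- the two marginal computations
  have hminorl : ∀ T : Finset (Fin n), pminor Kb (T.image Sum.inl) = pminor K T := by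
    intro T
    refine pminor_eq_of_equiv K Kb T (T.image Sum.inl)
      { toFun := fun x => ⟨Sum.inl x.1, Finset.mem_image_of_mem _ x.2⟩
        invFun := fun y => ⟨Sum.elim id id y.1, by
          obtain ⟨v, hv⟩ := y
          simp only [Finset.mem_image] at hv
          obtain ⟨a, ha, rfl⟩ := hv
          simpa using ha⟩
        left_inv := fun x => Subtype.ext rfl
        right_inv := by
          rintro ⟨v, hv⟩
          simp only [Finset.mem_image] at hv
          obtain ⟨a, ha, rfl⟩ := hv
          rfl } ?_
    intro x y
    simp [hKb]
  have hminorr : ∀ T : Finset (Fin n), pminor Kb (T.image Sum.inr) = pminor K T := by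
    intro T
    refine pminor_eq_of_equiv K Kb T (T.image Sum.inr)
      { toFun := fun x => ⟨Sum.inr x.1, Finset.mem_image_of_mem _ x.2⟩
        invFun := fun y => ⟨Sum.elim id id y.1, by
          obtain ⟨v, hv⟩ := y
          simp only [Finset.mem_image] at hv
          obtain ⟨a, ha, rfl⟩ := hv
          simpa using ha⟩
        left_inv := fun x => Subtype.ext rfl
        right_inv := by
          rintro ⟨v, hv⟩
          simp only [Finset.mem_image] at hv
          obtain ⟨a, ha, rfl⟩ := hv
          rfl } ?_
    intro x y
    simp [hKb]
  have marg_l : ∀ T : Finset (Fin n),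
      ∑ A ∈ Finset.univ.filter
        (fun A : Finset (Fin n ⊕ Fin n) => ∀ i ∈ T, Sum.inl i ∈ A), μ A = pminor K T := by
    intro T
    have hf : Finset.univ.filter (fun A : Finset (Fin n ⊕ Fin n) => ∀ i ∈ T, Sum.inl i ∈ A)
        = Finset.univ.filter (fun A : Finset (Fin n ⊕ Fin n) => T.image Sum.inl ⊆ A) := by
      ext A
      simp [Finset.image_subset_iff]
    rw [hf, hμcorr (T.image Sum.inl), hminorl]
  have marg_r : ∀ T : Finset (Fin n),
      ∑ A ∈ Finset.univ.filter
        (fun A : Finset (Fin n ⊕ Fin n) => ∀ i ∈ T, Sum.inr i ∈ A), μ A = pminor K T := by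
    intro T
    have hf : Finset.univ.filter (fun A : Finset (Fin n ⊕ Fin n) => ∀ i ∈ T, Sum.inr i ∈ A)
        = Finset.univ.filter (fun A : Finset (Fin n ⊕ Fin n) => T.image Sum.inr ⊆ A) := by
      ext A
      simp [Finset.image_subset_iff]
    rw [hf, hμcorr (T.image Sum.inr), hminorr]
  -- a point of `{1,…,2n}` is in `X` iff its partner is, almost surely
  have hzero : ∀ a b : Fin n ⊕ Fin n, pminor Kb {a} = pminor Kb ({a, b} : Finset _) →
      ∀ A : Finset (Fin n ⊕ Fin n), a ∈ A → b ∉ A → μ A = 0 := by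
    intro a b h1 A haA hbA
    have hs : ∑ B ∈ Finset.univ.filter (fun B : Finset (Fin n ⊕ Fin n) => a ∈ B), μ B
        = pminor Kb {a} := by
      rw [← hμcorr {a}]
      congr 1
      ext B
      simp [Finset.singleton_subset_iff]
    have hp : ∑ B ∈ Finset.univ.filter (fun B : Finset (Fin n ⊕ Fin n) => a ∈ B ∧ b ∈ B), μ B
        = pminor Kb ({a, b} : Finset _) := by
      rw [← hμcorr {a, b}]
      congr 1
      ext B
      simp [Finset.insert_subset_iff, Finset.singleton_subset_iff]
    have hsplit :
        ∑ B ∈ (Finset.univ.filter (fun B : Finset (Fin n ⊕ Fin n) => a ∈ B)).filter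
            (fun B => b ∈ B), μ B
        + ∑ B ∈ (Finset.univ.filter (fun B : Finset (Fin n ⊕ Fin n) => a ∈ B)).filter
            (fun B => b ∉ B), μ B
        = ∑ B ∈ Finset.univ.filter (fun B : Finset (Fin n ⊕ Fin n) => a ∈ B), μ B :=
      Finset.sum_filter_add_sum_filter_not _ _ _
    rw [Finset.filter_filter, Finset.filter_filter] at hsplit
    have h0 : ∑ B ∈ Finset.univ.filter
        (fun B : Finset (Fin n ⊕ Fin n) => a ∈ B ∧ b ∉ B), μ B = 0 := by
      rw [hp, hs, ← h1] at hsplit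
      linarith
    exact (Finset.sum_eq_zero_iff_of_nonneg (fun B _ => hμ0 B)).mp h0 A
      (by simp [haA, hbA])
  refine ⟨?_, marg_l, marg_r⟩
  intro A hA
  have hex : ∃ i : Fin n, ¬(Sum.inl i ∈ A ↔ Sum.inr i ∈ A) := by
    by_contra hcon
    push_neg at hcon
    apply hA
    ext i
    simp only [Finset.mem_filter, Finset.mem_univ, true_and]
    exact hcon i
  obtain ⟨i, hi⟩ := hex
  by_cases h1 : Sum.inl i ∈ A <;> by_cases h2 : Sum.inr i ∈ A
  · exact absurd (iff_of_true h1 h2) hi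
  · exact hzero (Sum.inl i) (Sum.inr i) (by rw [hsl i, hpair i]) A h1 h2
  · refine hzero (Sum.inr i) (Sum.inl i) ?_ A h2 h1
    rw [hsr i]
    have hset : ({Sum.inr i, Sum.inl i} : Finset (Fin n ⊕ Fin n))
        = {Sum.inl i, Sum.inr i} := by
      ext x
      simp [or_comm]
    rw [hset, hpair i]
  · exact absurd (iff_of_false h1 h2) hi
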